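/- For every 2-connected chordal graph G, the minimum cardinality of a longest cycle transversal of G is at most ω(G), the maximum size of a clique in G. -/

import Mathlib

open SimpleGraph

/-- A cycle of maximum length among all cycles of `G`. -/
def IsLongestCycle {V : Type} (G : SimpleGraph V) {v : V} (c : G.Walk v v) : Prop :=
  c.IsCycle ∧ ∀ (w : V) (d : G.Walk w w), d.IsCycle → d.length ≤ c.length
/-- `G` is 2-connected. -/
def TwoConnected {V : Type} [Fintype V] (G : SimpleGraph V) : Prop :=
  3 ≤ Fintype.card V ∧ ∀ v : V, ((⊤ : G.Subgraph).deleteVerts {v}).coe.Connected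
/-- A set of vertices meeting every longest cycle of `G`. -/
def IsLCTransversal {V : Type} (G : SimpleGraph V) (S : Finset V) : Prop :=
  ∀ (v : V) (c : G.Walk v v), IsLongestCycle G c → ∃ x ∈ S, x ∈ c.support
/-- `G` is chordal: every cycle of length at least 4 has a chord. -/
def IsChordal {V : Type} (G : SimpleGraph V) : Prop :=
  ∀ (v : V) (c : G.Walk v v), c.IsCycle → 4 ≤ c.length →
    ∃ u w, u ∈ c.support ∧ w ∈ c.support ∧ G.Adj u w ∧ s(u, w) ∉ c.edges

/-!
Two longest cycles of a 2-connected graph always meet: if they were disjoint, Menger's theorem for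
two paths would give two disjoint paths between them, and these paths together with the longer
arcs of both cycles would form a longer cycle.

Chordal graphs have a Helly property for connected vertex sets: a family of pairwise touching
connected sets is met by a single clique. Deleting a simplicial vertex reduces the family to a
smaller vertex set; simplicial vertices exist by Dirac's lemma, which rests on the fact that
minimal vertex separators of a chordal graph are cliques. Applied to the vertex sets of the longest
cycles, this clique is a longest cycle transversal with at most `ω(G)` vertices.
-/

open Walk

namespace SimpleGraph

variable {V : Type*} {G : SimpleGraph V}

namespace Walk

lemma exists_exit {S : Set V} {a b : V} (p : G.Walk a b) (ha : a ∈ S) (hb : b ∉ S) :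
    ∃ u ∈ S, ∃ w ∉ S, G.Adj u w ∧ w ∈ p.support ∧
      ∃ q : G.Walk a u, q.support ⊆ p.support ∧ ∀ v ∈ q.support, v ∈ S := by
  induction p with
  | nil => exact absurd ha hb
  | @cons a c b h p ih =>
    by_cases hc : c ∈ S
    · obtain ⟨u, hu, w, hw, huw, hwp, q, hqp, hqS⟩ := ih hc hb
      refine ⟨u, hu, w, hw, huw, by simp [hwp], cons h q, ?_, ?_⟩
      · rw [support_cons, support_cons]
        exact List.cons_subset_cons a hqp
      · simpa [ha] using hqS
    · exact ⟨a, ha, c, hc, h, by simp, nil, by simp, by simpa⟩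

lemma exists_prefix_first_mem {S : Set V} {a b : V} (p : G.Walk a b) (hb : b ∈ S) :
    ∃ c ∈ S, ∃ q : G.Walk a c, q.support ⊆ p.support ∧ ∀ v ∈ q.support, v ∈ S → v = c := by
  by_cases ha : a ∈ S
  · exact ⟨a, ha, nil, by simp, by simp⟩
  obtain ⟨u, hu, w, hw, huw, hwp, q, hqp, hqS⟩ := p.exists_exit (S := Sᶜ) ha (by simpa)
  refine ⟨w, not_not.mp hw, q.concat huw, ?_, fun v hv hvS => ?_⟩
  · simpa [support_concat] using ⟨hqp, hwp⟩
  · rw [support_concat, List.mem_append, List.mem_singleton] at hv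
    exact hv.resolve_left fun hvq => hqS v hvq hvS

lemma exists_isPath_between {A B : Set V} {a b : V} (p : G.Walk a b) (ha : a ∈ A)
    (hb : b ∈ B) :
    ∃ a' ∈ A, ∃ b' ∈ B, ∃ q : G.Walk a' b', q.IsPath ∧ q.support ⊆ p.support ∧
      (∀ v ∈ q.support, v ∈ A → v = a') ∧ ∀ v ∈ q.support, v ∈ B → v = b' := by
  classical
  obtain ⟨b', hb', q, hqp, hqB⟩ := p.exists_prefix_first_mem hb
  obtain ⟨a', ha', r, hrq, hrA⟩ := q.reverse.exists_prefix_first_mem (S := A) (by simpa using ha)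
  have hsub : r.reverse.bypass.support ⊆ r.support := fun v hv => by
    simpa using support_bypass_subset_support _ hv
  have hrq' : r.support ⊆ q.support := fun v hv => by simpa using hrq hv
  exact ⟨a', ha', b', hb', r.reverse.bypass, bypass_isPath _, fun v hv => hqp (hrq' (hsub hv)),
    fun v hv => hrA v (hsub hv), fun v hv => hqB v (hrq' (hsub hv))⟩

lemma IsPath.append_of_inter {u v w : V} {p : G.Walk u v} {q : G.Walk v w} (hp : p.IsPath)
    (hq : q.IsPath) (h : ∀ x ∈ p.support, x ∈ q.support → x = v) : (p.append q).IsPath := by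
  rw [isPath_def, support_append, List.nodup_append]
  refine ⟨hp.support_nodup, hq.support_nodup.sublist (List.tail_sublist _), ?_⟩
  rintro x hxp _ hxq rfl
  have hqnd := hq.support_nodup
  rw [← cons_tail_support, List.nodup_cons] at hqnd
  exact hqnd.1 (h x hxp (List.mem_of_mem_tail hxq) ▸ hxq)

lemma IsPath.start_notMem_support_tail {u v : V} {p : G.Walk u v} (hp : p.IsPath) :
    u ∉ p.support.tail := by
  have hnd := hp.support_nodup
  rw [← cons_tail_support, List.nodup_cons] at hnd
  exact hnd.1

lemma exists_shorter_of_adj_start {u w t : V} (p : G.Walk u t)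
    (hw : w ∈ p.support) (hadj : G.Adj u w) (he : s(u, w) ∉ p.edges) :
    ∃ q : G.Walk u t, q.length < p.length ∧ q.support ⊆ p.support := by
  classical
  refine ⟨cons hadj (p.dropUntil w hw), ?_, ?_⟩
  · have hlen := congrArg length (p.take_spec hw)
    rw [length_append] at hlen
    have h0 : (p.takeUntil w hw).length ≠ 0 := fun h => hadj.ne (eq_of_length_eq_zero h)
    have h1 : (p.takeUntil w hw).length ≠ 1 := by
      intro h
      cases hpw : p.takeUntil w hw with
      | nil => simp at h
      | cons h' r =>
        rw [hpw, length_cons, Nat.add_eq_right, length_eq_zero_iff] at h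
        cases h.eq
        exact he (p.edges_takeUntil_subset_edges hw (by simp [hpw]))
    simp only [length_cons]
    omega
  · rw [support_cons]
    exact List.cons_subset.mpr ⟨p.start_mem_support, p.support_dropUntil_subset_support hw⟩

lemma exists_shorter_of_chord {s t u w : V} (p : G.Walk s t) (hu : u ∈ p.support)
    (hw : w ∈ p.support) (hadj : G.Adj u w) (he : s(u, w) ∉ p.edges) :
    ∃ q : G.Walk s t, q.length < p.length ∧ q.support ⊆ p.support := by
  induction p with
  | nil =>
    simp only [support_nil, List.mem_singleton] at hu hw
    exact absurd (hu.trans hw.symm) hadj.ne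
  | @cons s x t h p ih =>
    by_cases hsu : s = u
    · subst hsu
      exact exists_shorter_of_adj_start _ hw hadj he
    by_cases hsw : s = w
    · subst hsw
      exact exists_shorter_of_adj_start _ hu hadj.symm (by rwa [Sym2.eq_swap])
    simp only [support_cons, List.mem_cons, edges_cons, not_or] at hu hw he
    obtain ⟨q, hql, hqs⟩ := ih (hu.resolve_left (Ne.symm hsu)) (hw.resolve_left (Ne.symm hsw)) he.2
    exact ⟨cons h q, by simpa using hql, by simpa using List.cons_subset_cons s hqs⟩

lemma exists_isPath_isChordless {u v : V} (S : Set V) (p : G.Walk u v)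
    (hp : ∀ x ∈ p.support, x ∈ S) :
    ∃ q : G.Walk u v, q.IsPath ∧ q.IsChordless ∧ ∀ x ∈ q.support, x ∈ S := by
  classical
  have hex : ∃ n, ∃ q : G.Walk u v, q.length = n ∧ ∀ x ∈ q.support, x ∈ S := ⟨_, p, rfl, hp⟩
  obtain ⟨q, hql, hqS⟩ := Nat.find_spec hex
  have hbyS : ∀ x ∈ q.bypass.support, x ∈ S :=
    fun x hx => hqS x (support_bypass_subset_support _ hx)
  refine ⟨q.bypass, bypass_isPath _,
    isChordless_iff_forall_mem_edges.mpr fun x y hx hy hxy => ?_, hbyS⟩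
  by_contra he
  obtain ⟨r, hrl, hrs⟩ := q.bypass.exists_shorter_of_chord hx hy hxy he
  have := Nat.find_min' hex ⟨r, rfl, fun z hz => hbyS z (hrs hz)⟩
  have := q.length_bypass_le_length
  omega

lemma IsCycle.exists_isPath_two_mul_length_ge {u a b : V} {c : G.Walk u u} (hc : c.IsCycle)
    (ha : a ∈ c.support) (hb : b ∈ c.support) (hab : a ≠ b) :
    ∃ q : G.Walk a b, q.IsPath ∧ c.length ≤ 2 * q.length ∧ ∀ x ∈ q.support, x ∈ c.support := by
  classical
  set c' := c.rotate a ha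
  have hc' : c'.IsCycle := hc.rotate ha
  have hb' : b ∈ c'.support := (mem_support_rotate_iff c a ha).mpr hb
  have hsub : ∀ x ∈ c'.support, x ∈ c.support := fun x => (mem_support_rotate_iff c a ha).mp
  have hspec := c'.take_spec hb'
  have hlen : (c'.takeUntil b hb').length + (c'.dropUntil b hb').length = c.length := by
    rw [← length_append, hspec, length_rotate]
  by_cases hcmp : (c'.dropUntil b hb').length ≤ (c'.takeUntil b hb').length
  · exact ⟨_, hc'.isPath_takeUntil hb', by omega,
      fun x hx => hsub x (c'.support_takeUntil_subset_support hb' hx)⟩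
  · have hdrop : (c'.dropUntil b hb').IsPath :=
      IsCycle.isPath_of_append_right (not_nil_of_ne hab) (by rwa [hspec])
    refine ⟨_, hdrop.reverse, by rw [length_reverse]; omega, fun x hx => ?_⟩
    rw [support_reverse, List.mem_reverse] at hx
    exact hsub x (c'.support_dropUntil_subset_support hb' hx)

end Walk

def Separates (G : SimpleGraph V) (T A B : Set V) : Prop :=
  ∀ a ∈ A, ∀ b ∈ B, ∀ p : G.Walk a b, ∃ v ∈ p.support, v ∈ T

def reachAvoiding (G : SimpleGraph V) (T A : Set V) : Set V :=
  {w | ∃ a ∈ A, ∃ p : G.Walk a w, ∀ v ∈ p.support, v ∉ T}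

section Separation

variable {T A B : Set V}

lemma not_separates_singleton_iff {z : V} :
    ¬ G.Separates {z} A B ↔ ∃ a ∈ A, ∃ b ∈ B, ∃ p : G.Walk a b, z ∉ p.support := by
  simp [Separates]

lemma Separates.symm (h : G.Separates T A B) : G.Separates T B A := fun b hb a ha p => by
  simpa using h a ha b hb p.reverse

lemma notMem_of_mem_reachAvoiding {w : V} (hw : w ∈ G.reachAvoiding T A) : w ∉ T := by
  obtain ⟨a, -, p, hp⟩ := hw
  exact hp w p.end_mem_support

lemma mem_reachAvoiding_of_mem {a : V} (ha : a ∈ A) (haT : a ∉ T) : a ∈ G.reachAvoiding T A :=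
  ⟨a, ha, nil, by simpa⟩

lemma mem_reachAvoiding_of_adj {w w' : V} (hw : w ∈ G.reachAvoiding T A) (hadj : G.Adj w w')
    (hw' : w' ∉ T) : w' ∈ G.reachAvoiding T A := by
  obtain ⟨a, ha, p, hp⟩ := hw
  refine ⟨a, ha, p.concat hadj, fun v hv => ?_⟩
  rw [support_concat, List.mem_append, List.mem_singleton] at hv
  rcases hv with hv | rfl
  exacts [hp v hv, hw']

lemma mem_reachAvoiding_of_mem_support {a w v : V} (ha : a ∈ A) (p : G.Walk a w)
    (hp : ∀ x ∈ p.support, x ∉ T) (hv : v ∈ p.support) : v ∈ G.reachAvoiding T A := by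
  classical
  exact ⟨a, ha, p.takeUntil v hv, fun x hx => hp x (p.support_takeUntil_subset_support hv hx)⟩

lemma Separates.disjoint_reachAvoiding (h : G.Separates T A B) :
    Disjoint (G.reachAvoiding T A) (G.reachAvoiding T B) := by
  rw [Set.disjoint_left]
  rintro w ⟨a, ha, p, hp⟩ ⟨b, hb, q, hq⟩
  obtain ⟨v, hv, hvT⟩ := h a ha b hb (p.append q.reverse)
  rw [mem_support_append_iff, support_reverse, List.mem_reverse] at hv
  exact hv.elim (hp v · hvT) (hq v · hvT)

lemma Separates.notMem_reachAvoiding (h : G.Separates T A B) {b : V} (hb : b ∈ B) :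
    b ∉ G.reachAvoiding T A := fun hbA =>
  Set.disjoint_left.mp h.disjoint_reachAvoiding hbA
    (mem_reachAvoiding_of_mem hb (notMem_of_mem_reachAvoiding hbA))

lemma Separates.not_adj (h : G.Separates T A B) {x y : V} (hx : x ∈ G.reachAvoiding T A)
    (hy : y ∈ G.reachAvoiding T B) : ¬ G.Adj x y := fun hxy =>
  Set.disjoint_left.mp h.disjoint_reachAvoiding
    (mem_reachAvoiding_of_adj hx hxy (notMem_of_mem_reachAvoiding hy)) hy

end Separation

def TwoLinked (G : SimpleGraph V) (A B : Set V) : Prop :=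
  ∃ a₁ ∈ A, ∃ b₁ ∈ B, ∃ a₂ ∈ A, ∃ b₂ ∈ B,
    ∃ (p₁ : G.Walk a₁ b₁) (p₂ : G.Walk a₂ b₂), p₁.support.Disjoint p₂.support

section Menger

variable {A B : Set V}

lemma TwoLinked.mono {H : SimpleGraph V} (hGH : G ≤ H) (h : G.TwoLinked A B) :
    H.TwoLinked A B := by
  obtain ⟨a₁, ha₁, b₁, hb₁, a₂, ha₂, b₂, hb₂, p₁, p₂, hp⟩ := h
  exact ⟨a₁, ha₁, b₁, hb₁, a₂, ha₂, b₂, hb₂, p₁.mapLe hGH, p₂.mapLe hGH,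
    by simpa [support_mapLe_eq_support] using hp⟩

lemma twoLinked_of_edgeSet_eq_empty [Nonempty V] (hE : G.edgeSet = ∅)
    (h : ∀ z, ¬ G.Separates {z} A B) : G.TwoLinked A B := by
  have hmem : ∀ z, ∃ a ∈ A, a ∈ B ∧ a ≠ z := fun z => by
    obtain ⟨a, ha, b, hb, p, hp⟩ := not_separates_singleton_iff.mp (h z)
    cases p with
    | nil => exact ⟨a, ha, hb, by simpa [eq_comm] using hp⟩
    | cons hadj _ => exact absurd (G.mem_edgeSet.mpr hadj) (hE ▸ Set.notMem_empty _)
  obtain ⟨a, ha, haB, -⟩ := hmem (Classical.arbitrary V)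
  obtain ⟨a', ha', ha'B, hne⟩ := hmem a
  exact ⟨a, ha, a, haB, a', ha', a', ha'B, nil, nil, by simpa using hne⟩

lemma mem_reachAvoiding_of_separates_deleteEdges {x y z a b : V}
    (hz : (G.deleteEdges {s(x, y)}).Separates {z} A B) (ha : a ∈ A) (hb : b ∈ B)
    (p : G.Walk a b) (hp : z ∉ p.support) :
    x ∈ (G.deleteEdges {s(x, y)}).reachAvoiding {z} A ∨
      y ∈ (G.deleteEdges {s(x, y)}).reachAvoiding {z} A := by
  have haz : a ∉ ({z} : Set V) := fun h => hp (h ▸ p.start_mem_support)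
  obtain ⟨u, hu, w, hw, huw, hwp, -⟩ :=
    p.exists_exit (mem_reachAvoiding_of_mem ha haz) (hz.notMem_reachAvoiding hb)
  have hxy : s(u, w) = s(x, y) := by
    by_contra hne
    exact hw (mem_reachAvoiding_of_adj hu ((deleteEdges_adj ..).mpr ⟨huw, hne⟩)
      fun h => hp (h ▸ hwp))
  rcases Sym2.eq_iff.mp hxy with ⟨rfl, -⟩ | ⟨rfl, -⟩
  exacts [.inl hu, .inr hu]

lemma not_separates_pair_of_separates_deleteEdges {x y z z' : V} (hzx : z ≠ x) (hzy : z ≠ y)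
    (h : ¬ G.Separates {z'} A B) (hz : (G.deleteEdges {s(x, y)}).Separates {z} A B)
    (hy : y ∉ (G.deleteEdges {s(x, y)}).reachAvoiding {z} A) :
    ¬ (G.deleteEdges {s(x, y)}).Separates {z'} A {x, z} := by
  rw [not_separates_singleton_iff] at h ⊢
  obtain ⟨a, ha, b, hb, W, hW⟩ := h
  by_cases haz : a = z
  · refine ⟨a, ha, a, by simp [haz], nil, ?_⟩
    rw [support_nil, List.mem_singleton]
    rintro rfl
    exact hW W.start_mem_support
  obtain ⟨u, hu, w, hw, huw, hwW, q, hqW, hqR⟩ :=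
    W.exists_exit (mem_reachAvoiding_of_mem ha haz) (hz.notMem_reachAvoiding hb)
  have huy : u ≠ y := fun h => hy (h ▸ hu)
  let q' := q.toDeleteEdge s(x, y) fun he => hy (hqR y (q.snd_mem_support_of_mem_edges he))
  have hq' : z' ∉ q'.support := by
    rw [support_transfer]
    exact fun h => hW (hqW h)
  by_cases hwz : w = z
  · subst hwz
    have hadj : (G.deleteEdges {s(x, y)}).Adj u w := by
      simpa [deleteEdges_adj, Sym2.eq_iff, huy, hzy, hzx] using huw
    refine ⟨a, ha, w, by simp, q'.concat hadj, ?_⟩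
    rw [support_concat, List.mem_append, List.mem_singleton, not_or]
    exact ⟨hq', fun h => hW (h ▸ hwW)⟩
  · have hux : u = x := by
      by_contra hux
      refine hw (mem_reachAvoiding_of_adj hu ?_ hwz)
      simpa [deleteEdges_adj, Sym2.eq_iff, hux, huy] using huw
    subst hux
    exact ⟨a, ha, u, by simp, q', hq'⟩

lemma exists_fan_of_separates_deleteEdges {x y z : V} (hzx : z ≠ x) (hzy : z ≠ y)
    (hlink : (∀ z', ¬ (G.deleteEdges {s(x, y)}).Separates {z'} A {x, z}) →
      (G.deleteEdges {s(x, y)}).TwoLinked A {x, z})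
    (h : ∀ z', ¬ G.Separates {z'} A B) (hz : (G.deleteEdges {s(x, y)}).Separates {z} A B)
    (hy : y ∉ (G.deleteEdges {s(x, y)}).reachAvoiding {z} A) :
    ∃ a₁ ∈ A, ∃ a₂ ∈ A, ∃ (q₁ : G.Walk a₁ x) (q₂ : G.Walk a₂ z),
      q₁.support.Disjoint q₂.support ∧
      (∀ v ∈ q₁.support, v ∈ (G.deleteEdges {s(x, y)}).reachAvoiding {z} A) ∧
      ∀ v ∈ q₂.support, v ≠ z → v ∈ (G.deleteEdges {s(x, y)}).reachAvoiding {z} A := by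
  classical
  obtain ⟨a₁, ha₁, c₁, hc₁, a₂, ha₂, c₂, hc₂, p₁, p₂, hp⟩ :=
    hlink fun z' => not_separates_pair_of_separates_deleteEdges hzx hzy (h z') hz hy
  wlog hc : c₁ = x generalizing a₁ a₂ c₁ c₂ p₁ p₂
  · have hc₁z : c₁ = z := by simpa [hc] using hc₁
    have hc₂x : c₂ = x := by
      have : c₂ ≠ z := fun h => by
        subst hc₁z h
        exact hp p₁.end_mem_support p₂.end_mem_support
      simpa [this] using hc₂
    exact this a₂ ha₂ c₂ hc₂ a₁ ha₁ c₁ hc₁ p₂ p₁ hp.symm hc₂x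
  subst c₁
  have hc₂z : c₂ = z := by
    have : c₂ ≠ x := fun h => by
      subst h
      exact hp p₁.end_mem_support p₂.end_mem_support
    simpa [this] using hc₂
  subst c₂
  have hzp₁ : z ∉ p₁.support := fun h => hp h p₂.end_mem_support
  refine ⟨a₁, ha₁, a₂, ha₂, p₁.mapLe (G.deleteEdges_le _), p₂.bypass.mapLe (G.deleteEdges_le _),
    ?_, ?_, ?_⟩
  · simp only [support_mapLe_eq_support]
    exact List.disjoint_of_subset_right (support_bypass_subset_support _) hp
  · simp only [support_mapLe_eq_support]
    exact fun v => mem_reachAvoiding_of_mem_support ha₁ p₁ fun u hu huz => hzp₁ (huz ▸ hu)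
  · simp only [support_mapLe_eq_support]
    intro v hv hvz
    refine ⟨a₂, ha₂, p₂.bypass.takeUntil v hv, fun u hu huz => ?_⟩
    rw [Set.mem_singleton_iff] at huz
    subst huz
    exact endpoint_notMem_support_takeUntil (bypass_isPath _) hv (Ne.symm hvz) hu

lemma twoLinked_of_fans {RA RB : Set V} {x y z a₁ a₂ b₁ b₂ : V} (hR : Disjoint RA RB)
    (hzA : z ∉ RA) (hzB : z ∉ RB) (hxy : G.Adj x y) (ha₁ : a₁ ∈ A) (ha₂ : a₂ ∈ A)
    (hb₁ : b₁ ∈ B) (hb₂ : b₂ ∈ B) (q₁ : G.Walk a₁ x) (q₂ : G.Walk a₂ z) (r₁ : G.Walk b₁ y)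
    (r₂ : G.Walk b₂ z) (hq : q₁.support.Disjoint q₂.support)
    (hr : r₁.support.Disjoint r₂.support) (hq₁ : ∀ v ∈ q₁.support, v ∈ RA)
    (hq₂ : ∀ v ∈ q₂.support, v ≠ z → v ∈ RA) (hr₁ : ∀ v ∈ r₁.support, v ∈ RB)
    (hr₂ : ∀ v ∈ r₂.support, v ≠ z → v ∈ RB) : G.TwoLinked A B := by
  refine ⟨a₁, ha₁, b₁, hb₁, a₂, ha₂, b₂, hb₂, q₁.append (cons hxy r₁.reverse),
    q₂.append r₂.reverse, fun v hv₁ hv₂ => ?_⟩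
  simp only [mem_support_append_iff, support_cons, List.mem_cons, support_reverse,
    List.mem_reverse] at hv₁ hv₂
  have hv₁' : v ∈ q₁.support ∨ v ∈ r₁.support := by
    rcases hv₁ with hv | rfl | hv
    exacts [.inl hv, .inl q₁.end_mem_support, .inr hv]
  have hR' := Set.disjoint_left.mp hR
  rcases hv₁' with hv₁ | hv₁ <;> rcases hv₂ with hv₂ | hv₂
  · exact hq hv₁ hv₂
  · by_cases hvz : v = z
    · exact hzA (hvz ▸ hq₁ v hv₁)
    · exact hR' (hq₁ v hv₁) (hr₂ v hv₂ hvz)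
  · by_cases hvz : v = z
    · exact hzB (hvz ▸ hr₁ v hv₁)
    · exact hR' (hq₂ v hv₂ hvz) (hr₁ v hv₁)
  · exact hr hv₁ hv₂

lemma ne_of_separates_deleteEdges {x y z : V} (h : ∀ z', ¬ G.Separates {z'} A B)
    (hz : (G.deleteEdges {s(x, y)}).Separates {z} A B) : z ≠ x ∧ z ≠ y := by
  have huses : ∀ a ∈ A, ∀ b ∈ B, ∀ p : G.Walk a b, z ∉ p.support → s(x, y) ∈ p.edges := by
    intro a ha b hb p hp
    by_contra he
    obtain ⟨v, hv, hvz⟩ := hz a ha b hb (p.toDeleteEdge _ he)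
    rw [support_transfer, Set.mem_singleton_iff] at *
    exact hp (hvz ▸ hv)
  obtain ⟨a, ha, b, hb, p, hp⟩ := not_separates_singleton_iff.mp (h x)
  obtain ⟨a', ha', b', hb', p', hp'⟩ := not_separates_singleton_iff.mp (h y)
  refine ⟨?_, ?_⟩ <;> rintro rfl
  · exact hp (p.fst_mem_support_of_mem_edges (huses a ha b hb p hp))
  · exact hp' (p'.snd_mem_support_of_mem_edges (huses a' ha' b' hb' p' hp'))

lemma twoLinked_of_separates_deleteEdges_of_mem {x y z : V} (hxy : G.Adj x y)
    (hlink : ∀ A' B' : Set V, (∀ z', ¬ (G.deleteEdges {s(x, y)}).Separates {z'} A' B') →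
      (G.deleteEdges {s(x, y)}).TwoLinked A' B')
    (h : ∀ z', ¬ G.Separates {z'} A B) (hz : (G.deleteEdges {s(x, y)}).Separates {z} A B)
    (hx : x ∈ (G.deleteEdges {s(x, y)}).reachAvoiding {z} A)
    (hy : y ∈ (G.deleteEdges {s(x, y)}).reachAvoiding {z} B) : G.TwoLinked A B := by
  obtain ⟨hzx, hzy⟩ := ne_of_separates_deleteEdges h hz
  have hAB := Set.disjoint_left.mp hz.disjoint_reachAvoiding
  have hswap : s(y, x) = s(x, y) := Sym2.eq_swap
  obtain ⟨a₁, ha₁, a₂, ha₂, q₁, q₂, hq, hq₁, hq₂⟩ :=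
    exists_fan_of_separates_deleteEdges hzx hzy (hlink _ _) h hz fun h' => hAB h' hy
  obtain ⟨b₁, hb₁, b₂, hb₂, r₁, r₂, hr, hr₁, hr₂⟩ :=
    exists_fan_of_separates_deleteEdges (A := B) (B := A) hzy hzx
      (by rw [hswap]; exact hlink _ _) (fun z' hsep => h z' hsep.symm)
      (by rw [hswap]; exact hz.symm) (by rw [hswap]; exact fun h' => hAB hx h')
  rw [hswap] at hr₁ hr₂
  exact twoLinked_of_fans hz.disjoint_reachAvoiding (notMem_of_mem_reachAvoiding · rfl)
    (notMem_of_mem_reachAvoiding · rfl) hxy ha₁ ha₂ hb₁ hb₂ q₁ q₂ r₁ r₂ hq hr hq₁ hq₂ hr₁ hr₂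

lemma twoLinked_of_separates_deleteEdges {x y z : V} (hxy : G.Adj x y)
    (hlink : ∀ A' B' : Set V, (∀ z', ¬ (G.deleteEdges {s(x, y)}).Separates {z'} A' B') →
      (G.deleteEdges {s(x, y)}).TwoLinked A' B')
    (h : ∀ z', ¬ G.Separates {z'} A B) (hz : (G.deleteEdges {s(x, y)}).Separates {z} A B) :
    G.TwoLinked A B := by
  obtain ⟨a, ha, b, hb, p, hp⟩ := not_separates_singleton_iff.mp (h z)
  have hA := mem_reachAvoiding_of_separates_deleteEdges hz ha hb p hp
  have hB := mem_reachAvoiding_of_separates_deleteEdges hz.symm hb ha p.reverse (by simpa)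
  have hAB := Set.disjoint_left.mp hz.disjoint_reachAvoiding
  rcases hA with hA | hA <;> rcases hB with hB | hB
  · exact absurd hB (hAB hA)
  · exact twoLinked_of_separates_deleteEdges_of_mem hxy hlink h hz hA hB
  · have hswap : s(y, x) = s(x, y) := Sym2.eq_swap
    rw [← hswap] at hlink hz hA hB
    exact twoLinked_of_separates_deleteEdges_of_mem hxy.symm hlink h hz hA hB
  · exact absurd hB (hAB hA)

lemma deleteEdges_singleton_lt {e : Sym2 V} (he : e ∈ G.edgeSet) : G.deleteEdges {e} < G :=
  (G.deleteEdges_le _).lt_of_ne fun h => by simp_all [deleteEdges_eq_self]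

/- Induction on `G`: delete an edge whose removal creates no cut vertex between `A` and `B`. If
every edge `xy` is essential, with `z` a cut vertex of `G - xy`, induction in `G - xy` gives fans
from `A` to `{x, z}` and from `B` to `{y, z}`, which glue along `xy` and at `z`. -/
theorem twoLinked_of_forall_not_separates [Finite V] [Nonempty V]
    (h : ∀ z, ¬ G.Separates {z} A B) : G.TwoLinked A B := by
  induction G using WellFoundedLT.induction generalizing A B with
  | _ G IH =>
  by_cases hdel : ∃ e ∈ G.edgeSet, ∀ z, ¬ (G.deleteEdges {e}).Separates {z} A B
  · obtain ⟨e, he, h'⟩ := hdel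
    exact (IH _ (deleteEdges_singleton_lt he) h').mono (G.deleteEdges_le _)
  push Not at hdel
  rcases G.edgeSet.eq_empty_or_nonempty with hE | ⟨e, he⟩
  · exact twoLinked_of_edgeSet_eq_empty hE h
  induction e using Sym2.ind with
  | _ x y =>
  obtain ⟨z, hz⟩ := hdel _ he
  exact twoLinked_of_separates_deleteEdges he (fun A' B' => IH _ (deleteEdges_singleton_lt he)) h hz

end Menger

def IsPreconnectedOn (G : SimpleGraph V) (X : Set V) : Prop :=
  ∀ x ∈ X, ∀ y ∈ X, ∃ p : G.Walk x y, ∀ v ∈ p.support, v ∈ X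

def Touches (G : SimpleGraph V) (X Y : Set V) : Prop :=
  ∃ x ∈ X, ∃ y ∈ Y, x = y ∨ G.Adj x y

def IsSimplicialIn (G : SimpleGraph V) (U : Set V) (v : V) : Prop :=
  G.IsClique (G.neighborSet v ∩ U)

lemma Walk.isPreconnectedOn_support {u w : V} (p : G.Walk u w) :
    G.IsPreconnectedOn {v | v ∈ p.support} := by
  classical
  intro x hx y hy
  refine ⟨(p.takeUntil x hx).reverse.append (p.takeUntil y hy), fun v hv => ?_⟩
  rw [mem_support_append_iff, support_reverse, List.mem_reverse] at hv
  exact hv.elim (p.support_takeUntil_subset_support hx ·) (p.support_takeUntil_subset_support hy ·)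

lemma isPreconnectedOn_reachAvoiding (T : Set V) (a : V) :
    G.IsPreconnectedOn (G.reachAvoiding T {a}) := by
  rintro x ⟨a₁, ha₁, p, hp⟩ y ⟨a₂, ha₂, q, hq⟩
  rw [Set.mem_singleton_iff] at ha₁ ha₂
  subst ha₁ ha₂
  refine ⟨p.reverse.append q, fun v hv => ?_⟩
  rw [mem_support_append_iff, support_reverse, List.mem_reverse] at hv
  exact hv.elim (mem_reachAvoiding_of_mem_support (Set.mem_singleton _) p hp)
    (mem_reachAvoiding_of_mem_support (Set.mem_singleton _) q hq)

lemma IsPreconnectedOn.exists_walk_of_adj {X : Set V} (hX : G.IsPreconnectedOn X) {s t x y : V}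
    (hx : x ∈ X) (hy : y ∈ X) (hsx : G.Adj s x) (hyt : G.Adj y t) :
    ∃ p : G.Walk s t, ∀ v ∈ p.support, v ∈ insert s (insert t X) := by
  obtain ⟨p, hp⟩ := hX x hx y hy
  refine ⟨cons hsx (p.concat hyt), fun v hv => ?_⟩
  simp only [support_cons, support_concat, List.mem_cons, List.mem_append] at hv
  rcases hv with rfl | hv | rfl | hv
  exacts [.inl rfl, .inr (.inr (hp v hv)), .inr (.inl rfl), absurd hv List.not_mem_nil]

lemma exists_adj_mem_reachAvoiding {T A : Set V} {a b s : V} (ha : a ∈ A) (haT : a ∉ T)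
    (hb : b ∉ G.reachAvoiding T A) (p : G.Walk a b) (hp : ∀ v ∈ p.support, v ∈ T → v = s) :
    ∃ x ∈ G.reachAvoiding T A, G.Adj x s := by
  obtain ⟨u, hu, w, hw, huw, hwp, -⟩ := p.exists_exit (mem_reachAvoiding_of_mem ha haT) hb
  by_cases hwT : w ∈ T
  · exact ⟨u, hu, hp w hwp hwT ▸ huw⟩
  · exact absurd (mem_reachAvoiding_of_adj hu huw hwT) hw

lemma IsPreconnectedOn.exists_replace {X : Set V} {v : V} (hX : G.IsPreconnectedOn X)
    (hX' : (X \ {v}).Nonempty) {x : V} (hx : x ∈ X) :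
    ∃ x' ∈ X \ {v}, x' = x ∨ x = v ∧ G.Adj v x' := by
  by_cases hxv : x = v
  · subst hxv
    obtain ⟨w, hw, hwx⟩ := hX'
    obtain ⟨p, hp⟩ := hX x hx w hw
    cases p with
    | nil => exact absurd rfl hwx
    | cons h p => exact ⟨_, ⟨hp _ (by simp), h.ne.symm⟩, .inr ⟨rfl, h⟩⟩
  · exact ⟨x, ⟨hx, hxv⟩, .inl rfl⟩

namespace IsSimplicialIn

variable {U : Set V} {v : V}

lemma eq_or_adj_of_replace (hv : G.IsSimplicialIn U v) {x x' y : V} (hx'U : x' ∈ U)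
    (hyU : y ∈ U) (hx' : x' = x ∨ x = v ∧ G.Adj v x') (h : x = y ∨ G.Adj x y) :
    x' = y ∨ G.Adj x' y := by
  rcases hx' with rfl | ⟨rfl, hvx'⟩
  · exact h
  rcases h with rfl | hvy
  · exact .inr hvx'.symm
  · exact or_iff_not_imp_left.mpr (hv ⟨hvx', hx'U⟩ ⟨hvy, hyU⟩)

/- `u` is the start of `p`, or a neighbour of it when `p` starts at `v`: this is the statement
that survives the induction on `p`. -/
lemma exists_walk_diff (hv : G.IsSimplicialIn U v) {X : Set V} (hXU : X ⊆ U) {x y u : V}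
    (p : G.Walk x y) (hp : ∀ w ∈ p.support, w ∈ X) (hy : y ≠ v) (hu : u ∈ X \ {v})
    (hux : u = x ∨ x = v ∧ G.Adj v u) : ∃ q : G.Walk u y, ∀ w ∈ q.support, w ∈ X \ {v} := by
  induction p generalizing u with
  | nil =>
    rcases hux with rfl | ⟨rfl, -⟩
    · exact ⟨nil, by simpa using hu⟩
    · exact absurd rfl hy
  | @cons x x' y h p ih =>
    have hp' : ∀ w ∈ p.support, w ∈ X := fun w hw => hp w (by simp [hw])
    have hx' : x' ∈ X := hp' x' p.start_mem_support
    rcases hux with rfl | ⟨hxv, hvu⟩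
    · by_cases hx'v : x' = v
      · exact ih hp' hy hu (.inr ⟨hx'v, hx'v ▸ h.symm⟩)
      obtain ⟨q, hq⟩ := ih hp' hy ⟨hx', hx'v⟩ (.inl rfl)
      refine ⟨cons h q, fun w hw => ?_⟩
      rw [support_cons, List.mem_cons] at hw
      exact hw.elim (· ▸ hu) (hq w)
    · subst hxv
      obtain ⟨q, hq⟩ := ih hp' hy ⟨hx', h.ne.symm⟩ (.inl rfl)
      by_cases hux' : u = x'
      · exact hux' ▸ ⟨q, hq⟩
      refine ⟨cons (hv ⟨hvu, hXU hu.1⟩ ⟨h, hXU hx'⟩ hux') q, fun w hw => ?_⟩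
      rw [support_cons, List.mem_cons] at hw
      exact hw.elim (· ▸ hu) (hq w)

lemma isPreconnectedOn_diff (hv : G.IsSimplicialIn U v) {X : Set V} (hXU : X ⊆ U)
    (hX : G.IsPreconnectedOn X) : G.IsPreconnectedOn (X \ {v}) := fun x hx y hy => by
  obtain ⟨p, hp⟩ := hX x hx.1 y hy.1
  exact hv.exists_walk_diff hXU p hp hy.2 hx (.inl rfl)

lemma touches_diff (hv : G.IsSimplicialIn U v) {X Y : Set V} (hXU : X ⊆ U) (hYU : Y ⊆ U)
    (hX : G.IsPreconnectedOn X) (hY : G.IsPreconnectedOn Y) (hX' : (X \ {v}).Nonempty)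
    (hY' : (Y \ {v}).Nonempty) (h : G.Touches X Y) : G.Touches (X \ {v}) (Y \ {v}) := by
  obtain ⟨x, hx, y, hy, hxy⟩ := h
  obtain ⟨x', hx', hxx'⟩ := hX.exists_replace hX' hx
  obtain ⟨y', hy', hyy'⟩ := hY.exists_replace hY' hy
  have hx'y := hv.eq_or_adj_of_replace (hXU hx'.1) (hYU hy) hxx' hxy
  have hy'x' := hv.eq_or_adj_of_replace (hYU hy'.1) (hXU hx'.1) hyy'
    (hx'y.imp Eq.symm Adj.symm)
  exact ⟨x', hx', y', hy', hy'x'.imp Eq.symm Adj.symm⟩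

end IsSimplicialIn

lemma exists_isCycle_of_linked_cycles {u u' a₁ a₂ b₁ b₂ : V} {c : G.Walk u u}
    {c' : G.Walk u' u'} (hc : c.IsCycle) (hc' : c'.IsCycle) (hcc' : c.support.Disjoint c'.support)
    {p₁ : G.Walk a₁ b₁} {p₂ : G.Walk a₂ b₂} (hp₁ : p₁.IsPath) (hp₂ : p₂.IsPath)
    (hp : p₁.support.Disjoint p₂.support)
    (ha₁ : a₁ ∈ c.support) (ha₂ : a₂ ∈ c.support) (hb₁ : b₁ ∈ c'.support)
    (hb₂ : b₂ ∈ c'.support) (hp₁c : ∀ v ∈ p₁.support, v ∈ c.support → v = a₁)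
    (hp₂c : ∀ v ∈ p₂.support, v ∈ c.support → v = a₂)
    (hp₁c' : ∀ v ∈ p₁.support, v ∈ c'.support → v = b₁)
    (hp₂c' : ∀ v ∈ p₂.support, v ∈ c'.support → v = b₂) :
    ∃ (w : V) (d : G.Walk w w), d.IsCycle ∧ c.length + c'.length < 2 * d.length := by
  obtain ⟨f, hf, hfl, hfc⟩ := hc.exists_isPath_two_mul_length_ge ha₁ ha₂
    fun h => hp p₁.start_mem_support (h ▸ p₂.start_mem_support)
  obtain ⟨g, hg, hgl, hgc'⟩ := hc'.exists_isPath_two_mul_length_ge hb₂ hb₁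
    fun h => hp p₁.end_mem_support (h ▸ p₂.end_mem_support)
  have hlen : ∀ {a b : V} (p : G.Walk a b), a ∈ c.support → b ∈ c'.support → 1 ≤ p.length := by
    rintro a b (_ | _) ha hb
    exacts [absurd hb (hcc' ha), by simp]
  have hX : ((f.append p₂).append g).IsPath := by
    refine (hf.append_of_inter hp₂ fun v hvf hvp => hp₂c v hvp (hfc v hvf)).append_of_inter hg ?_
    intro v hv hvg
    rcases (mem_support_append_iff _ _).mp hv with hv | hv
    exacts [absurd (hgc' v hvg) (hcc' (hfc v hv)), hp₂c' v hv (hgc' v hvg)]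
  have hcyc := hX.isCycle_append hp₁.reverse (fun v hvX hvp => ?_) (.inl ?_)
  · refine ⟨a₁, _, hcyc, ?_⟩
    have := hc.three_le_length
    have := hlen p₁ ha₁ hb₁
    have := hlen p₂ ha₂ hb₂
    simp only [length_append, length_reverse]
    omega
  · have hvp₁ : v ∈ p₁.support := by simpa using List.mem_of_mem_tail hvp
    rcases (mem_support_append_iff _ _).mp (List.mem_of_mem_tail hvX) with hv | hv
    · rcases (mem_support_append_iff _ _).mp hv with hv | hv
      · exact hX.start_notMem_support_tail (hp₁c v hvp₁ (hfc v hv) ▸ hvX)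
      · exact hp hvp₁ hv
    · exact hp₁.reverse.start_notMem_support_tail (hp₁c' v hvp₁ (hgc' v hv) ▸ hvp)
  · have := hc.three_le_length
    have := hlen p₂ ha₂ hb₂
    simp only [length_append]
    omega

lemma Walk.IsPath.isCycle_append_reverse {s t : V} {q₁ q₂ : G.Walk s t} (hq₁ : q₁.IsPath)
    (hq₂ : q₂.IsPath) {R₁ R₂ : Set V} (hR : Disjoint R₁ R₂)
    (hq₁R : ∀ v ∈ q₁.support, v ∈ insert s (insert t R₁))
    (hq₂R : ∀ v ∈ q₂.support, v ∈ insert s (insert t R₂)) (hlen : 2 ≤ q₁.length) :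
    (q₁.append q₂.reverse).IsCycle := by
  refine hq₁.isCycle_append hq₂.reverse (fun v hv₁ hv₂ => ?_) (.inl hlen)
  have hvs : v ≠ s := fun h => hq₁.start_notMem_support_tail (h ▸ hv₁)
  have hvt : v ≠ t := fun h => hq₂.reverse.start_notMem_support_tail (h ▸ hv₂)
  have h₁ := hq₁R v (List.mem_of_mem_tail hv₁)
  have h₂ := hq₂R v (by simpa using List.mem_of_mem_tail hv₂)
  simp only [Set.mem_insert_iff, hvs, hvt, false_or] at h₁ h₂
  exact Set.disjoint_left.mp hR h₁ h₂

lemma exists_walk_avoiding_of_connected_deleteVerts {z a b : V}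
    (hconn : ((⊤ : G.Subgraph).deleteVerts {z}).coe.Connected) (ha : a ≠ z) (hb : b ≠ z) :
    ∃ p : G.Walk a b, z ∉ p.support := by
  obtain ⟨W⟩ := hconn.preconnected ⟨a, by simp [ha]⟩ ⟨b, by simp [hb]⟩
  refine ⟨W.map (Subgraph.hom _), fun hz => ?_⟩
  obtain ⟨⟨w, hw⟩, -, hwz⟩ := List.mem_map.mp
    (show z ∈ W.support.map (Subgraph.hom _) by rw [← Walk.support_map]; exact hz)
  simp only [Subgraph.deleteVerts_verts, Set.mem_sdiff, Set.mem_singleton_iff] at hw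
  exact hw.2 hwz

end SimpleGraph

section

variable {V : Type} {G : SimpleGraph V}

lemma IsLongestCycle.exists_mem_support_mem_support [Finite V]
    (hconn : ∀ v : V, ((⊤ : G.Subgraph).deleteVerts {v}).coe.Connected) {u u' : V}
    {c : G.Walk u u} {c' : G.Walk u' u'} (hc : IsLongestCycle G c) (hc' : IsLongestCycle G c') :
    ∃ z ∈ c.support, z ∈ c'.support := by
  by_contra! hcc'
  have hnontriv : ∀ {w : V} {d : G.Walk w w}, d.IsCycle → {v | v ∈ d.support}.Nontrivial :=
    fun {w} {d} hd => ⟨w, d.start_mem_support, d.snd, d.getVert_mem_support 1,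
      (adj_snd hd.not_nil).ne⟩
  have : Nonempty V := ⟨u⟩
  obtain ⟨a₁, ha₁, b₁, hb₁, a₂, ha₂, b₂, hb₂, p₁, p₂, hp⟩ :=
    twoLinked_of_forall_not_separates (G := G) (A := {v | v ∈ c.support})
      (B := {v | v ∈ c'.support}) fun z => by
    obtain ⟨a, ha, haz⟩ := (hnontriv hc.1).exists_ne z
    obtain ⟨b, hb, hbz⟩ := (hnontriv hc'.1).exists_ne z
    obtain ⟨p, hp⟩ := exists_walk_avoiding_of_connected_deleteVerts (hconn z) haz hbz
    exact not_separates_singleton_iff.mpr ⟨a, ha, b, hb, p, hp⟩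
  obtain ⟨a₁', ha₁', b₁', hb₁', q₁, hq₁, hq₁p, hq₁c, hq₁c'⟩ := p₁.exists_isPath_between ha₁ hb₁
  obtain ⟨a₂', ha₂', b₂', hb₂', q₂, hq₂, hq₂p, hq₂c, hq₂c'⟩ := p₂.exists_isPath_between ha₂ hb₂
  obtain ⟨w, d, hd, hlen⟩ := exists_isCycle_of_linked_cycles hc.1 hc'.1 (fun v h h' => hcc' v h h')
    hq₁ hq₂ (fun v h h' => hp (hq₁p h) (hq₂p h')) ha₁' ha₂' hb₁' hb₂' hq₁c hq₂c hq₁c' hq₂c'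
  have := hc.2 w d hd
  have := hc'.2 w d hd
  omega

/- Shortest such walks close up to a cycle of length at least four, and each of its possible
chords would join `R₁` to `R₂`. -/
lemma IsChordal.adj_of_walks (hG : IsChordal G) {R₁ R₂ : Set V} (hR : Disjoint R₁ R₂)
    (hR' : ∀ x ∈ R₁, ∀ y ∈ R₂, ¬ G.Adj x y) {s t : V} (hst : s ≠ t) (p₁ p₂ : G.Walk s t)
    (hp₁ : ∀ v ∈ p₁.support, v ∈ insert s (insert t R₁))
    (hp₂ : ∀ v ∈ p₂.support, v ∈ insert s (insert t R₂)) : G.Adj s t := by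
  by_contra hnadj
  obtain ⟨q₁, hq₁, hq₁c, hq₁R⟩ := p₁.exists_isPath_isChordless _ hp₁
  obtain ⟨q₂, hq₂, hq₂c, hq₂R⟩ := p₂.exists_isPath_isChordless _ hp₂
  have hlen : ∀ q : G.Walk s t, 2 ≤ q.length := fun q => by
    by_contra! h
    interval_cases hq : q.length
    exacts [hst (eq_of_length_eq_zero hq), hnadj (adj_of_length_eq_one hq)]
  have hmem₁ : ∀ v ∈ q₁.support, v ∉ q₂.support → v ∈ R₁ := fun v hv hv₂ => by
    rcases hq₁R v hv with rfl | rfl | hv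
    exacts [absurd q₂.start_mem_support hv₂, absurd q₂.end_mem_support hv₂, hv]
  have hmem₂ : ∀ v ∈ q₂.support, v ∉ q₁.support → v ∈ R₂ := fun v hv hv₁ => by
    rcases hq₂R v hv with rfl | rfl | hv
    exacts [absurd q₁.start_mem_support hv₁, absurd q₁.end_mem_support hv₁, hv]
  obtain ⟨u, w, hu, hw, huw, he⟩ := hG s _ (hq₁.isCycle_append_reverse hq₂ hR hq₁R hq₂R (hlen q₁))
    (by have := hlen q₁; have := hlen q₂; simp only [length_append, length_reverse]; omega)
  simp only [mem_support_append_iff, support_reverse, List.mem_reverse, edges_append,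
    edges_reverse, List.mem_append, not_or] at hu hw he
  by_cases hu₁ : u ∈ q₁.support <;> by_cases hw₁ : w ∈ q₁.support
  · exact he.1 (hq₁c.mem_edges hu₁ hw₁ huw)
  · have hw₂ := hw.resolve_left hw₁
    by_cases hu₂ : u ∈ q₂.support
    · exact he.2 (hq₂c.mem_edges hu₂ hw₂ huw)
    · exact hR' u (hmem₁ u hu₁ hu₂) w (hmem₂ w hw₂ hw₁) huw
  · have hu₂ := hu.resolve_left hu₁
    by_cases hw₂ : w ∈ q₂.support
    · exact he.2 (hq₂c.mem_edges hu₂ hw₂ huw)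
    · exact hR' w (hmem₁ w hw₁ hw₂) u (hmem₂ u hu₂ hu₁) huw.symm
  · exact he.2 (hq₂c.mem_edges (hu.resolve_left hu₁) (hw.resolve_left hw₁) huw)

/- With `W = Uᶜ`, `T` encodes a minimal separator of `a` and `b` inside the vertex set `U`; working
relative to `U` this way avoids induced subgraphs throughout. -/
lemma IsChordal.isClique_diff_of_minimal (hG : IsChordal G) {W T : Set V} {a b : V}
    (hT : Minimal (fun T => W ⊆ T ∧ a ∉ T ∧ b ∉ T ∧ G.Separates T {a} {b}) T) :
    G.IsClique (T \ W) := by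
  obtain ⟨⟨hWT, haT, hbT, hsep⟩, hmin⟩ := hT
  have hnbr : ∀ s ∈ T \ W, (∃ x ∈ G.reachAvoiding T {a}, G.Adj x s) ∧
      ∃ y ∈ G.reachAvoiding T {b}, G.Adj y s := by
    intro s hs
    have hnsep : ¬ G.Separates (T \ {s}) {a} {b} := fun h' =>
      (hmin (y := T \ {s})
        ⟨fun w hw => ⟨hWT hw, fun h => hs.2 (h ▸ hw)⟩, fun h => haT h.1, fun h => hbT h.1, h'⟩
        Set.sdiff_subset hs.1).2 rfl
    simp only [Separates, Set.mem_singleton_iff, forall_eq, Set.mem_sdiff, not_forall, not_exists,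
      not_and, not_not] at hnsep
    obtain ⟨p, hp⟩ := hnsep
    exact ⟨exists_adj_mem_reachAvoiding rfl haT (hsep.notMem_reachAvoiding rfl) p hp,
      exists_adj_mem_reachAvoiding rfl hbT (hsep.symm.notMem_reachAvoiding rfl) p.reverse
        fun v hv => hp v (by simpa using hv)⟩
  intro s hs t ht hst
  obtain ⟨⟨xs, hxs, hxss⟩, ys, hys, hyss⟩ := hnbr s hs
  obtain ⟨⟨xt, hxt, hxtt⟩, yt, hyt, hytt⟩ := hnbr t ht
  obtain ⟨p₁, hp₁⟩ := (isPreconnectedOn_reachAvoiding T a).exists_walk_of_adj hxs hxt hxss.symm hxtt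
  obtain ⟨p₂, hp₂⟩ := (isPreconnectedOn_reachAvoiding T b).exists_walk_of_adj hys hyt hyss.symm hytt
  exact hG.adj_of_walks hsep.disjoint_reachAvoiding (fun x hx y hy => hsep.not_adj hx hy) hst
    p₁ p₂ hp₁ hp₂

lemma exists_isSimplicialIn_mem_reachAvoiding {U T : Set V} {a b : V}
    (IH : ∀ S ⊂ U, G.IsClique S ∨ ∃ v ∈ S, ∃ w ∈ S, v ≠ w ∧ ¬ G.Adj v w ∧
      G.IsSimplicialIn S v ∧ G.IsSimplicialIn S w)
    (hUT : Uᶜ ⊆ T) (hT : G.IsClique (T \ Uᶜ)) (haT : a ∉ T) (hb : b ∈ U) (hbT : b ∉ T)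
    (hsep : G.Separates T {a} {b}) :
    ∃ v ∈ G.reachAvoiding T {a}, G.IsSimplicialIn U v := by
  set R := G.reachAvoiding T {a}
  have haR : a ∈ R := mem_reachAvoiding_of_mem rfl haT
  have hRU : R ⊆ U := fun v hv => not_not.mp fun h => notMem_of_mem_reachAvoiding hv (hUT h)
  have hSU : R ∪ T \ Uᶜ ⊂ U := by
    refine (Set.ssubset_iff_of_subset (Set.union_subset hRU fun v hv => not_not.mp hv.2)).mpr
      ⟨b, hb, fun h => ?_⟩
    rcases h with hbR | hbT'
    exacts [hsep.notMem_reachAvoiding rfl hbR, hbT hbT'.1]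
  have hlift : ∀ v ∈ R, G.IsSimplicialIn (R ∪ T \ Uᶜ) v → G.IsSimplicialIn U v := by
    intro v hv hvs
    refine hvs.subset ?_
    rintro w ⟨hvw, hwU⟩
    refine ⟨hvw, ?_⟩
    by_cases hwT : w ∈ T
    exacts [.inr ⟨hwT, not_not.mpr hwU⟩, .inl (mem_reachAvoiding_of_adj hv hvw hwT)]
  rcases IH _ hSU with hS | ⟨v, hv, w, hw, hvw, hnadj, hvs, hws⟩
  · exact ⟨a, haR, hlift a haR (hS.subset Set.inter_subset_right)⟩
  rcases hv with hv | hv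
  · exact ⟨v, hv, hlift v hv hvs⟩
  rcases hw with hw | hw
  · exact ⟨w, hw, hlift w hw hws⟩
  exact absurd (hT hv hw hvw) hnadj

theorem IsChordal.isClique_or_exists_isSimplicialIn [Finite V] (hG : IsChordal G) (U : Set V) :
    G.IsClique U ∨ ∃ v ∈ U, ∃ w ∈ U, v ≠ w ∧ ¬ G.Adj v w ∧
      G.IsSimplicialIn U v ∧ G.IsSimplicialIn U w := by
  induction U using WellFoundedLT.induction with
  | _ U IH =>
  by_cases hU : G.IsClique U
  · exact .inl hU
  right
  obtain ⟨a, ha, b, hb, hab, hnadj⟩ : ∃ a ∈ U, ∃ b ∈ U, a ≠ b ∧ ¬ G.Adj a b := by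
    simpa [IsClique, Set.Pairwise] using hU
  have hsep₀ : G.Separates {a, b}ᶜ {a} {b} := by
    rintro _ rfl _ rfl p
    cases p with
    | nil => exact absurd rfl hab
    | @cons _ x _ h p =>
      refine ⟨x, by simp, ?_⟩
      simp only [Set.mem_compl_iff, Set.mem_insert_iff, Set.mem_singleton_iff, not_or]
      exact ⟨h.ne.symm, fun hx => hnadj (hx ▸ h)⟩
  obtain ⟨T, -, hT⟩ := exists_minimal_le_of_wellFoundedLT
    (fun T => Uᶜ ⊆ T ∧ a ∉ T ∧ b ∉ T ∧ G.Separates T {a} {b}) {a, b}ᶜ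
    ⟨by simp [Set.insert_subset_iff, ha, hb], by simp, by simp, hsep₀⟩
  have hcl := hG.isClique_diff_of_minimal hT
  obtain ⟨⟨hUT, haT, hbT, hsep⟩, -⟩ := hT
  have hRU : ∀ {c}, G.reachAvoiding T {c} ⊆ U := fun hv =>
    not_not.mp fun h => notMem_of_mem_reachAvoiding hv (hUT h)
  obtain ⟨v, hv, hvs⟩ := exists_isSimplicialIn_mem_reachAvoiding IH hUT hcl haT hb hbT hsep
  obtain ⟨w, hw, hws⟩ := exists_isSimplicialIn_mem_reachAvoiding IH hUT hcl hbT ha haT hsep.symm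
  exact ⟨v, hRU hv, w, hRU hw,
    fun h => Set.disjoint_left.mp hsep.disjoint_reachAvoiding hv (h ▸ hw),
    hsep.not_adj hv hw, hvs, hws⟩

lemma IsChordal.exists_isSimplicialIn [Finite V] (hG : IsChordal G) {U : Set V}
    (hU : U.Nonempty) : ∃ v ∈ U, G.IsSimplicialIn U v := by
  rcases hG.isClique_or_exists_isSimplicialIn U with hU' | ⟨v, hv, -, -, -, -, hvs, -⟩
  · obtain ⟨v, hv⟩ := hU
    exact ⟨v, hv, hU'.subset Set.inter_subset_right⟩
  · exact ⟨v, hv, hvs⟩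

theorem IsChordal.exists_isClique_forall_inter_nonempty [Finite V] (hG : IsChordal G)
    (U : Set V) (F : Set (Set V)) (hFU : ∀ X ∈ F, X ⊆ U) (hne : ∀ X ∈ F, X.Nonempty)
    (hconn : ∀ X ∈ F, G.IsPreconnectedOn X) (htouch : ∀ X ∈ F, ∀ Y ∈ F, G.Touches X Y) :
    ∃ K, G.IsClique K ∧ ∀ X ∈ F, (K ∩ X).Nonempty := by
  induction U using WellFoundedLT.induction generalizing F with
  | _ U IH =>
  rcases F.eq_empty_or_nonempty with rfl | ⟨X₀, hX₀⟩
  · exact ⟨∅, isClique_empty, by simp⟩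
  obtain ⟨v, hvU, hv⟩ := hG.exists_isSimplicialIn ((hne X₀ hX₀).mono (hFU X₀ hX₀))
  by_cases hsingle : {v} ∈ F
  · refine ⟨insert v (G.neighborSet v ∩ U), hv.insert fun w hw _ => hw.1, fun Y hY => ?_⟩
    obtain ⟨x, hx, y, hy, hxy⟩ := htouch _ hsingle Y hY
    rw [Set.mem_singleton_iff] at hx
    subst hx
    rcases hxy with rfl | hxy
    · exact ⟨x, .inl rfl, hy⟩
    · exact ⟨y, .inr ⟨hxy, hFU Y hY hy⟩, hy⟩
  have hne' : ∀ X ∈ F, (X \ {v}).Nonempty := fun X hX => by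
    by_contra h
    rw [Set.not_nonempty_iff_eq_empty, Set.sdiff_eq_empty, Set.subset_singleton_iff_eq] at h
    exact hsingle (h.resolve_left (hne X hX).ne_empty ▸ hX)
  obtain ⟨K, hK, hKF⟩ := IH (U \ {v}) (Set.sdiff_singleton_ssubset.mpr hvU) ((· \ {v}) '' F)
    (by rintro _ ⟨X, hX, rfl⟩; exact Set.sdiff_subset_sdiff_left (hFU X hX))
    (by rintro _ ⟨X, hX, rfl⟩; exact hne' X hX)
    (by rintro _ ⟨X, hX, rfl⟩; exact hv.isPreconnectedOn_diff (hFU X hX) (hconn X hX))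
    (by
      rintro _ ⟨X, hX, rfl⟩ _ ⟨Y, hY, rfl⟩
      exact hv.touches_diff (hFU X hX) (hFU Y hY) (hconn X hX) (hconn Y hY) (hne' X hX)
        (hne' Y hY) (htouch X hX Y hY))
  exact ⟨K, hK, fun X hX =>
    (hKF _ ⟨X, hX, rfl⟩).mono (Set.inter_subset_inter_right _ Set.sdiff_subset)⟩

end

/-- For every 2-connected chordal graph, there is a longest cycle transversal of
cardinality at most the clique number. -/
theorem stmt_7 {V : Type} [Fintype V] (G : SimpleGraph V) (hG : TwoConnected G)
    (hch : IsChordal G) :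
    ∃ S : Finset V, IsLCTransversal G S ∧ S.card ≤ G.cliqueNum := by
  classical
  obtain ⟨K, hK, hKF⟩ := hch.exists_isClique_forall_inter_nonempty Set.univ
    {X | ∃ (v : V) (c : G.Walk v v), IsLongestCycle G c ∧ X = {z | z ∈ c.support}}
    (fun _ _ => Set.subset_univ _)
    (by rintro _ ⟨v, c, -, rfl⟩; exact ⟨v, c.start_mem_support⟩)
    (by rintro _ ⟨v, c, -, rfl⟩; exact c.isPreconnectedOn_support)
    (by
      rintro _ ⟨v, c, hc, rfl⟩ _ ⟨v', c', hc', rfl⟩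
      obtain ⟨z, hz, hz'⟩ := hc.exists_mem_support_mem_support hG.2 hc'
      exact ⟨z, hz, z, hz', .inl rfl⟩)
  refine ⟨K.toFinset, fun v c hc => ?_, IsClique.card_le_cliqueNum (tc := by simpa using hK)⟩
  obtain ⟨x, hxK, hxc⟩ := hKF _ ⟨v, c, hc, rfl⟩
  exact ⟨x, by simpa using hxK, hxc⟩
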